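/- Let X be a geometrically connected smooth proper variety over a field k of characteristic 0 with x ∈ X(k), and let E_2 be the second term of the iterated universal extension of nilpotent vector bundles on X (the universal extension of O_X). Then Ext¹(E_2, O_X) = H¹(X, E_2^∨) is canonically isomorphic to the kernel of the cup product map ∪ : H¹(X, O_X) ⊗ H¹(X, O_X) → H²(X, O_X), up to sign. -/

import Mathlib

/-! Restricting along `S.f : H¹(X,O_X)^∨ ⊗ O_X → E₂` embeds `Ext¹(E₂, O_X)` into
`Ext¹(S.X₁, O_X)`, injectively because the preceding connecting map
`Hom(S.X₁, O_X) → Ext¹(O_X, O_X)` is onto, and with image the kernel of the Yoneda product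
with the extension class `Ext¹(S.X₁, O_X) → Ext²(O_X, O_X)`. Along the biproduct decomposition
`Ext¹(S.X₁, O_X) = ⨁ᵢ Ext¹(O_X, O_X)` the extension class has components `bᵢ`, so this
product becomes the cup product `c ↦ Σᵢ bᵢ ∪ cᵢ`. -/

open CategoryTheory CategoryTheory.Limits CategoryTheory.Abelian MonoidalCategory

attribute [local instance] CategoryTheory.Limits.HasFiniteBiproducts.of_hasFiniteProducts

universe w v u

variable (k : Type u) [Field k]

/- `C` stands for coherent sheaves on `X`, with `𝟙_ C = O_X`, so that
`Ext^i(O_X, O_X) = H^i(X, O_X)` and the composition of `Ext` classes is the cup product. -/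
variable {C : Type u} [Category.{v} C] [Abelian C] [Linear k C]
  [MonoidalCategory C] [MonoidalPreadditive C] [HasExt.{w} C]

namespace CategoryTheory

variable {D : Type*} [Category D]

namespace Limits

/- Reducible, so that `(c.ofIsoPt e).pt` is seen as `A` when rewriting. -/
@[simps]
abbrev Bicone.ofIsoPt {J : Type*} {f : J → D} [HasZeroMorphisms D] (c : Bicone f) {A : D}
    (e : A ≅ c.pt) : Bicone f where
  pt := A
  π j := e.hom ≫ c.π j
  ι j := c.ι j ≫ e.inv
  ι_π j j' := by simp [c.ι_π]

def Bicone.IsBilimit.ofIsoPt {J : Type*} [Fintype J] {f : J → D} [Preadditive D] {c : Bicone f}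
    (hc : c.IsBilimit) {A : D} (e : A ≅ c.pt) : (c.ofIsoPt e).IsBilimit :=
  isBilimitOfTotal _ <| calc
    _ = e.hom ≫ (∑ j, c.π j ≫ c.ι j) ≫ e.inv := by
      simp [Preadditive.comp_sum, Preadditive.sum_comp]
    _ = 𝟙 A := by simp [IsBilimit.total hc]

end Limits

namespace Abelian.Ext

variable [Abelian D] [HasExt.{w} D]

lemma mk₀_hom_comp_eq_zero_iff {X X' Y : D} (e : X ≅ X') {n : ℕ} (z : Ext X' Y n) :
    (mk₀ e.hom).comp z (zero_add n) = 0 ↔ z = 0 := by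
  refine ⟨fun h => ?_, fun h => by rw [h, comp_zero]⟩
  simpa [mk₀_comp_mk₀_assoc] using congrArg (fun t => (mk₀ e.inv).comp t (zero_add n)) h

lemma comp_eq_sum_comp_biproductAddEquiv {J : Type*} [Fintype J] {X : J → D}
    {c : Limits.Bicone X} (hc : c.IsBilimit) {Z Y : D} {p n m : ℕ} (α : Ext Z c.pt p)
    (y : Ext c.pt Y n) (h : p + n = m) :
    α.comp y h =
      ∑ i, (α.comp (mk₀ (c.π i)) (add_zero p)).comp (biproductAddEquiv hc Y n y i) h := by
  conv_lhs => rw [← (biproductAddEquiv hc Y n).symm_apply_apply y]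
  simp only [biproductAddEquiv, AddEquiv.coe_mk, Equiv.coe_fn_mk, AddEquiv.symm_mk,
    Equiv.coe_fn_symm_mk, comp_sum]
  exact Finset.sum_congr rfl fun i _ => (comp_assoc_of_second_deg_zero _ _ _ _).symm

end Abelian.Ext

namespace ShortComplex.ShortExact

open Abelian

variable [Abelian D] [HasExt.{w} D] {S : ShortComplex D} (hS : S.ShortExact) (Y : D)

lemma mk₀_f_comp_injective {n₀ n₁ : ℕ} (hn : 1 + n₀ = n₁)
    (hsurj : Function.Surjective fun x : Ext S.X₁ Y n₀ => hS.extClass.comp x hn) :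
    Function.Injective fun x : Ext S.X₂ Y n₁ => (Ext.mk₀ S.f).comp x (zero_add n₁) := by
  refine (injective_iff_map_eq_zero ((Ext.mk₀ S.f).precomp Y (zero_add n₁))).2 fun x hx => ?_
  obtain ⟨x₃, rfl⟩ := Ext.contravariant_sequence_exact₂ hS Y x hx
  obtain ⟨x₁, rfl⟩ := hsurj x₃
  exact hS.comp_extClass_assoc x₁ (by omega)

lemma range_mk₀_f_comp {n₀ n₁ : ℕ} (hn : 1 + n₀ = n₁) :
    Set.range (fun x : Ext S.X₂ Y n₀ => (Ext.mk₀ S.f).comp x (zero_add n₀)) =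
      {y | hS.extClass.comp y hn = 0} :=
  Set.ext fun y => ⟨by rintro ⟨x, rfl⟩; exact hS.extClass_comp_assoc x,
    Ext.contravariant_sequence_exact₁ hS Y y hn⟩

end ShortComplex.ShortExact

end CategoryTheory

/- `S` is the universal extension `0 → H¹(X,O_X)^∨ ⊗ O_X → E₂ → O_X → 0`, with `ι`
indexing a basis `b` of `H¹(X,O_X)`; `δ` is the connecting map and `Φ` records the
restrictions of a class in `Ext¹(E₂, O_X)` to the summands of `S.X₁`. -/
theorem ext1_of_second_universal_extension_eq_ker_cup_general
    (ι : Type) [Fintype ι]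
    (S : ShortComplex C) (hS : S.ShortExact)
    (hX₃ : S.X₃ = 𝟙_ C)
    (e : S.X₁ ≅ ⨁ (fun (_ : ι) => (𝟙_ C)))
    (b : ι → Ext (𝟙_ C : C) (𝟙_ C : C) 1)
    (δ : (S.X₁ ⟶ (𝟙_ C : C)) → Ext S.X₃ (𝟙_ C : C) 1)
    (hδ : ∀ f, δ f = hS.extClass.comp (Ext.mk₀ f) (add_zero 1))
    (hb : ∀ i : ι, δ (e.hom ≫ biproduct.π _ i) =
      (Ext.mk₀ (eqToHom hX₃)).comp (b i) (zero_add 1))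
    (hbasis : Function.Bijective δ)
    (Φ : Ext S.X₂ (𝟙_ C : C) 1 → (ι → Ext (𝟙_ C : C) (𝟙_ C : C) 1))
    (hΦ : ∀ x i, Φ x i = (Ext.mk₀ (biproduct.ι (fun (_ : ι) => (𝟙_ C : C)) i ≫ e.inv ≫ S.f)).comp x (zero_add 1)) :
    Function.Injective Φ ∧
    Set.range Φ = {c : ι → Ext (𝟙_ C : C) (𝟙_ C : C) 1 |
      (Finset.univ.sum fun i => (b i).comp (c i) rfl) = 0} := by
  let B := (biproduct.bicone fun _ : ι => (𝟙_ C : C)).ofIsoPt e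
  let hc : B.IsBilimit := (biproduct.isBilimit _).ofIsoPt e
  set components := Ext.biproductAddEquiv hc (𝟙_ C) 1
  have hΦ_eq : Φ = components ∘ fun x => (Ext.mk₀ S.f).comp x (zero_add 1) := by
    ext x i
    simp [hΦ, components, B, Ext.biproductAddEquiv, ← Ext.mk₀_comp_mk₀_assoc]
  have hcup : ∀ y : Ext B.pt (𝟙_ C) 1,
      hS.extClass.comp y rfl = 0 ↔ ∑ i, (b i).comp (components y i) rfl = 0 := by
    intro y
    have hterm : ∀ i,
        (hS.extClass.comp (Ext.mk₀ (B.π i)) (add_zero 1)).comp (components y i) rfl =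
          (Ext.mk₀ (eqToIso hX₃).hom).comp ((b i).comp (components y i) rfl) (zero_add 2) := by
      intro i
      rw [Bicone.ofIsoPt_π, biproduct.bicone_π, ← hδ, hb, Ext.comp_assoc _ _ _ _ _ (by omega)]
      rfl
    rw [Ext.comp_eq_sum_comp_biproductAddEquiv hc, Finset.sum_congr rfl fun i _ => hterm i,
      ← Ext.comp_sum, Ext.mk₀_hom_comp_eq_zero_iff]
  have hsurj :
      Function.Surjective fun u : Ext S.X₁ (𝟙_ C) 0 => hS.extClass.comp u (add_zero 1) :=
    fun w => let ⟨u, hu⟩ := hbasis.2 w; ⟨Ext.mk₀ u, (hδ u).symm.trans hu⟩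
  refine ⟨hΦ_eq ▸ components.injective.comp (hS.mk₀_f_comp_injective _ _ hsurj), ?_⟩
  rw [hΦ_eq, Set.range_comp, hS.range_mk₀_f_comp _ rfl, ← components.coe_toEquiv,
    Equiv.image_eq_preimage_symm]
  ext c
  exact (hcup (components.symm c)).trans (by rw [components.apply_symm_apply]; rfl)

/-- **The first Ext group of the second universal extension** (the case `n = 2` of
Proposition 2.19): let `E₂ = U(O_X)` be the universal extension of `O_X`, sitting in
the short exact sequence `0 → H¹(X,O_X)^∨ ⊗ O_X → E₂ → O_X → 0` whose extension class
is the identity of `End(H¹(X,O_X))`.  Then `Ext¹(E₂, O_X) = H¹(X, E₂^∨)` is canonically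
isomorphic (up to sign) to the kernel of the cup product
`∪ : H¹(X,O_X) ⊗ H¹(X,O_X) → H²(X,O_X)`.

Encoding: `S` is the universal extension, with `S.X₃ = O_X = 𝟙_ C` and kernel
`S.X₁ = ⨁_{i : ι} O_X = H¹(X,O_X)^∨ ⊗ O_X`, where `ι` indexes a basis `b` of
`H¹(X,O_X) = Ext¹(O_X,O_X)`; the hypothesis `hb` says the extension class of `S` has
components `b i` (classification by the identity) and `hbasis` that `b` is a basis
(the connecting map `δ` is bijective).  The conclusion: the restriction map
`Φ : Ext¹(E₂, O_X) → Hom(S.X₁, O_X)-components = (ι → Ext¹(O_X,O_X))` is injective,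
with image exactly the kernel of the cup product `c ↦ Σᵢ (b i) ∪ (c i)` — i.e.
`Ext¹(E₂,O_X) ≅ ker ∪` canonically, up to sign. -/
theorem ext1_of_second_universal_extension_eq_ker_cup
    (ι : Type) [Fintype ι] [DecidableEq ι]
    (hEnd : Function.Bijective (fun a : k => a • 𝟙 (𝟙_ C)))
    (S : ShortComplex C) (hS : S.ShortExact)
    (hX₃ : S.X₃ = 𝟙_ C)
    (e : S.X₁ ≅ ⨁ (fun (_ : ι) => (𝟙_ C)))
    (b : ι → Ext (𝟙_ C : C) (𝟙_ C : C) 1)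
    (δ : (S.X₁ ⟶ (𝟙_ C : C)) → Ext S.X₃ (𝟙_ C : C) 1)
    (hδ : ∀ f, δ f = hS.extClass.comp (Ext.mk₀ f) (add_zero 1))
    (hb : ∀ i : ι, δ (e.hom ≫ biproduct.π _ i) =
      (Ext.mk₀ (eqToHom hX₃)).comp (b i) (zero_add 1))
    (hbasis : Function.Bijective δ)
    (Φ : Ext S.X₂ (𝟙_ C : C) 1 → (ι → Ext (𝟙_ C : C) (𝟙_ C : C) 1))
    (hΦ : ∀ x i, Φ x i = (Ext.mk₀ (biproduct.ι (fun (_ : ι) => (𝟙_ C : C)) i ≫ e.inv ≫ S.f)).comp x (zero_add 1)) :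
    Function.Injective Φ ∧
    Set.range Φ = {c : ι → Ext (𝟙_ C : C) (𝟙_ C : C) 1 |
      (Finset.univ.sum fun i => (b i).comp (c i) rfl) = 0} :=
  ext1_of_second_universal_extension_eq_ker_cup_general ι S hS hX₃ e b δ hδ hb hbasis Φ hΦ
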